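/- arXiv:1604.06707 — 4 statements merged into one kernel-verified Lean document; each statement's English description precedes it below -/
import Mathlib

section
/- The m-ary reflected Gray code for n-tuples is a list of length m^n containing every n-tuple over {0,...,m-1} exactly once. -/
/-- The `m`-ary reflected Gray code on `n`-tuples over `{0, …, m-1}`, with the
least significant digit `a₁` last in the list.  For `n = 0` it is the single
empty tuple; each codeword `Cᵢ` of the code for length `n` (1-indexed `i`) is
extended by the digits `0, …, m-1` in increasing order if `i` is odd and in
decreasing order if `i` is even. -/
def mGray (m : ℕ) : ℕ → List (List ℕ)
  | 0 => [[]]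
  | n + 1 =>
      ((mGray m n).zipIdx.map Prod.swap |>.map (fun p =>
        (if p.1 % 2 = 0 then List.range m else (List.range m).reverse).map
          (fun d => p.2 ++ [d]))).flatten

/-!
Reversing the digit order within a block only permutes it, so the code of length `n + 1` is a
permutation of the list obtained by extending every codeword of length `n` by `0, …, m-1` in
increasing order. Length, duplicate-freeness and membership are invariant under permutation, and
for that list they follow by induction on `n`.
-/

open List

theorem mGray_succ_perm (m n : ℕ) :
    mGray m (n + 1) ~ (mGray m n).flatMap fun c => (range m).map fun d => c ++ [d] := by
  let extend (c : List ℕ) := (range m).map fun d => c ++ [d]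
  calc mGray m (n + 1)
      = ((mGray m n).zipIdx.map Prod.swap).flatMap fun p =>
          (if p.1 % 2 = 0 then range m else (range m).reverse).map fun d => p.2 ++ [d] := by
        rw [mGray, flatMap_def]
    _ ~ ((mGray m n).zipIdx.map Prod.swap).flatMap fun p => extend p.2 :=
        Perm.flatMap_left _ fun p _ => by
          split
          · rfl
          · exact (reverse_perm _).map _
    _ = (mGray m n).flatMap extend := by
        conv_rhs => rw [← zipIdx_map_fst 0 (mGray m n), flatMap_map]
        rw [flatMap_map]; rfl

theorem List.length_flatMap_map_append_singleton {α : Type*} (L : List (List α)) (D : List α) :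
    (L.flatMap fun c => D.map fun d => c ++ [d]).length = L.length * D.length := by
  simp [length_flatMap]

theorem List.nodup_flatMap_map_append_singleton {α : Type*} {L : List (List α)} {D : List α}
    (hL : L.Nodup) (hD : D.Nodup) : (L.flatMap fun c => D.map fun d => c ++ [d]).Nodup := by
  refine nodup_flatMap.2 ⟨fun c _ => hD.map fun _ _ h => by simpa using h, hL.imp ?_⟩
  intro c c' hne l hl hl'
  simp only [mem_map] at hl hl'
  obtain ⟨d, -, rfl⟩ := hl
  obtain ⟨d', -, h⟩ := hl'
  exact hne (append_inj' h rfl).1.symm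

theorem List.length_eq_succ_and_forall_mem_iff {α : Type*} {p : α → Prop} {n : ℕ} {l : List α} :
    (l.length = n + 1 ∧ ∀ x ∈ l, p x) ↔
      ∃ c, (c.length = n ∧ ∀ x ∈ c, p x) ∧ ∃ d, p d ∧ l = c ++ [d] := by
  constructor
  · rintro ⟨hl, hp⟩
    obtain rfl | ⟨c, d, rfl⟩ := l.eq_nil_or_concat
    · simp at hl
    · simp_all
  · rintro ⟨c, ⟨rfl, hc⟩, d, hd, rfl⟩
    simp_all [or_imp]

/-- The `m`-ary reflected Gray code for `n`-tuples is a list of length `m^n`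
containing every `n`-tuple over `{0, …, m-1}` exactly once. -/
theorem mGray_enumerates (m n : ℕ) :
    (mGray m n).length = m ^ n ∧ (mGray m n).Nodup ∧
      ∀ l : List ℕ, l ∈ mGray m n ↔ (l.length = n ∧ ∀ x ∈ l, x < m) := by
  induction n with
  | zero => simp [mGray, length_eq_zero_iff]
  | succ n ih =>
    obtain ⟨hlen, hnodup, hmem⟩ := ih
    have hperm := mGray_succ_perm m n
    refine ⟨?_, ?_, fun l => ?_⟩
    · rw [hperm.length_eq, length_flatMap_map_append_singleton, hlen, length_range, pow_succ]
    · exact hperm.nodup_iff.2 (nodup_flatMap_map_append_singleton hnodup nodup_range)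
    · rw [hperm.mem_iff, length_eq_succ_and_forall_mem_iff]
      simp [hmem, eq_comm]
end

section
/- For the mixed radixes m_1,...,m_n with all m_i ≥ 2 and S(k) = Σ_{i=1}^{k} (ρ(i)+1), we have S(k) ≤ 2k for all k with 1 ≤ k ≤ m_1 m_2 ⋯ m_n, with equality never attained (S(k) < 2k) when k < m_1 m_2 ⋯ m_n. -/
open Finset in
/-- `P m i = m₁ m₂ ⋯ m_i`, the product of the first `i` radixes
(the empty product for `i = 0` is `1`). -/
def radixProd (m : ℕ → ℕ) (i : ℕ) : ℕ := ∏ t ∈ Finset.range i, m (t + 1)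

/-- `mixedRho m n k` is the largest `i` with `0 ≤ i ≤ n` such that
`m₁ m₂ ⋯ m_i` divides `k`. -/
def mixedRho (m : ℕ → ℕ) (n k : ℕ) : ℕ :=
  Nat.findGreatest (fun i => radixProd m i ∣ k) n

lemma radixProd_dvd (m : ℕ → ℕ) {i j : ℕ} (h : i ≤ j) :
    radixProd m i ∣ radixProd m j :=
  Finset.prod_dvd_prod_of_subset _ _ _ (Finset.range_subset_range.2 h)

lemma two_pow_le_radixProd (m : ℕ → ℕ) (n : ℕ) (hm : ∀ i, 1 ≤ i → i ≤ n → 2 ≤ m i)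
    {j : ℕ} (hj : j ≤ n) : 2 ^ j ≤ radixProd m j := by
  calc 2 ^ j = ∏ _t ∈ Finset.range j, 2 := by simp
    _ ≤ ∏ t ∈ Finset.range j, m (t + 1) :=
        Finset.prod_le_prod' fun t ht => hm _ (by omega)
          (by have := Finset.mem_range.1 ht; omega)

lemma rho_card (m : ℕ → ℕ) (n i : ℕ) :
    mixedRho m n i + 1
      = ((Finset.range (n + 1)).filter (fun j => radixProd m j ∣ i)).card := by
  have h0 : radixProd m 0 ∣ i := by simp [radixProd]
  have hspec : radixProd m (mixedRho m n i) ∣ i :=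
    Nat.findGreatest_spec (P := fun j => radixProd m j ∣ i) (Nat.zero_le n) h0
  have hle : mixedRho m n i ≤ n := Nat.findGreatest_le n
  have hset : (Finset.range (n + 1)).filter (fun j => radixProd m j ∣ i)
      = Finset.range (mixedRho m n i + 1) := by
    ext j
    simp only [Finset.mem_filter, Finset.mem_range]
    constructor
    · rintro ⟨hj, hd⟩
      have h2 : j ≤ Nat.findGreatest (fun j => radixProd m j ∣ i) n :=
        Nat.le_findGreatest (by omega) hd
      have h3 : j ≤ mixedRho m n i := h2
      omega
    · intro hj
      exact ⟨by omega, (radixProd_dvd m (by omega)).trans hspec⟩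
  rw [hset, Finset.card_range]

lemma geo_sum_le (n : ℕ) : ∀ k : ℕ, 1 ≤ k →
    (∑ j ∈ Finset.range (n + 1), k / 2 ^ j) ≤ 2 * k - 1 := by
  induction n with
  | zero => intro k hk; simp; omega
  | succ n ih =>
    intro k hk
    rw [Finset.sum_range_succ']
    have hrw : ∀ j, k / 2 ^ (j + 1) = (k / 2) / 2 ^ j := by
      intro j
      rw [Nat.div_div_eq_div_mul, pow_succ, mul_comm]
    simp only [hrw, pow_zero, Nat.div_one]
    rcases Nat.lt_or_ge k 2 with h2 | h2
    · have : k = 1 := by omega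
      subst this
      simp
    · have := ih (k / 2) (by omega)
      omega

open Finset in
/-- `S(k) = Σ_{i=1}^{k} (ρ(i)+1)` satisfies `S(k) ≤ 2k` for
`1 ≤ k ≤ m₁ ⋯ m_n`, and even `S(k) < 2k` whenever `k < m₁ ⋯ m_n`. -/
theorem mixed_S_le_two_k (n : ℕ) (m : ℕ → ℕ)
    (hm : ∀ i, 1 ≤ i → i ≤ n → 2 ≤ m i)
    (k : ℕ) (hk1 : 1 ≤ k) (hk2 : k ≤ radixProd m n) :
    (∑ i ∈ Finset.Icc 1 k, (mixedRho m n i + 1)) ≤ 2 * k ∧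
      (k < radixProd m n → (∑ i ∈ Finset.Icc 1 k, (mixedRho m n i + 1)) < 2 * k) := by
  have key : (∑ i ∈ Finset.Icc 1 k, (mixedRho m n i + 1)) < 2 * k := by
    have step1 : (∑ i ∈ Finset.Icc 1 k, (mixedRho m n i + 1))
        = ∑ j ∈ Finset.range (n + 1), k / radixProd m j := by
      calc (∑ i ∈ Finset.Icc 1 k, (mixedRho m n i + 1))
          = ∑ i ∈ Finset.Icc 1 k,
              ((Finset.range (n + 1)).filter (fun j => radixProd m j ∣ i)).card := by
            exact Finset.sum_congr rfl fun i _ => rho_card m n i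

        _ = ∑ i ∈ Finset.Icc 1 k, ∑ j ∈ Finset.range (n + 1),
              (if radixProd m j ∣ i then 1 else 0) := by
            simp only [Finset.card_filter]
        _ = ∑ j ∈ Finset.range (n + 1), ∑ i ∈ Finset.Icc 1 k,
              (if radixProd m j ∣ i then 1 else 0) := Finset.sum_comm
        _ = ∑ j ∈ Finset.range (n + 1),
              ((Finset.Icc 1 k).filter (fun i => radixProd m j ∣ i)).card := by
            simp only [Finset.card_filter]
        _ = ∑ j ∈ Finset.range (n + 1), k / radixProd m j := by
            refine Finset.sum_congr rfl fun j _ => ?_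
            have : Finset.Icc 1 k = Finset.Ioc 0 k := rfl
            rw [this]
            exact Nat.Ioc_filter_dvd_card_eq_div k (radixProd m j)
    have step2 : (∑ j ∈ Finset.range (n + 1), k / radixProd m j)
        ≤ ∑ j ∈ Finset.range (n + 1), k / 2 ^ j := by
      refine Finset.sum_le_sum fun j hj => ?_
      have hj' : j ≤ n := by have := Finset.mem_range.1 hj; omega
      exact Nat.div_le_div_left (two_pow_le_radixProd m n hm hj') (by positivity)
    have step3 := geo_sum_le n k hk1
    omega
  exact ⟨le_of_lt key, fun _ => key⟩
end

section
/- In the state graph of the Towers of Bucharest with n ≥ 1 disks (vertices are the 3^n legal configurations, edges are legal moves), every configuration has exactly two legal moves, except the two configurations where all disks lie on P_0 or all on P_2, which each have exactly one legal move. -/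
/-- A configuration of the Towers of Bucharest/Hanoi with `n` disks assigns to
each disk `D_{d+1}` (disk `d : Fin n`; smaller index means smaller disk) the
peg `c d : Fin 3` on which it lies.  Disks on the same peg are necessarily
stacked in size order. -/
abbrev HanoiConf (n : ℕ) := Fin n → Fin 3

/-- A legal move of the Towers of Bucharest: some disk `d` which is topmost on
its peg (no smaller disk on the same peg) moves to an *adjacent* peg
(`P₀ ↔ P₁` or `P₁ ↔ P₂`) carrying no smaller disk; all other disks stay. -/
def bucharestMove {n : ℕ} (c c' : HanoiConf n) : Prop :=
  ∃ d : Fin n,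
    c d ≠ c' d ∧
    ((c d : ℕ) + 1 = (c' d : ℕ) ∨ (c' d : ℕ) + 1 = (c d : ℕ)) ∧
    (∀ e, e ≠ d → c e = c' e) ∧
    (∀ e, e < d → c e ≠ c d ∧ c e ≠ c' d)

private lemma vne {a b : Fin 3} (h : a ≠ b) : (a : ℕ) ≠ (b : ℕ) :=
  fun hh => h (Fin.ext hh)

private lemma vne' {a b : Fin 3} (h : (a : ℕ) ≠ (b : ℕ)) : a ≠ b :=
  fun hh => h (by rw [hh])

private lemma veq {a b : Fin 3} (h : (a : ℕ) = (b : ℕ)) : a = b := Fin.ext h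

private lemma move_shape {n : ℕ} {c c' : HanoiConf n} (h : bucharestMove c c') :
    ∃ d, c d ≠ c' d ∧ ((c d : ℕ) + 1 = (c' d : ℕ) ∨ (c' d : ℕ) + 1 = (c d : ℕ)) ∧
      (∀ e, e < d → c e ≠ c d ∧ c e ≠ c' d) ∧ c' = Function.update c d (c' d) := by
  obtain ⟨d, h1, h2, h3, h4⟩ := h
  refine ⟨d, h1, h2, h4, funext fun e => ?_⟩
  by_cases he : e = d
  · subst he; simp
  · rw [Function.update_of_ne he, ← h3 e he]

private lemma mk_move {n : ℕ} (c : HanoiConf n) (d : Fin n) (t : Fin 3) (h1 : c d ≠ t)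
    (h2 : (c d : ℕ) + 1 = (t : ℕ) ∨ (t : ℕ) + 1 = (c d : ℕ))
    (h4 : ∀ e, e < d → c e ≠ c d ∧ c e ≠ t) :
    bucharestMove c (Function.update c d t) :=
  ⟨d, by simpa using h1, by simpa using h2,
    fun e he => (Function.update_of_ne he t c).symm,
    fun e he => by simpa using h4 e he⟩

/-- In the state graph of the Towers of Bucharest with `n ≥ 1` disks, every
configuration has exactly two legal moves, except the configurations with all
disks on `P₀` or all on `P₂`, which have exactly one legal move each. -/
theorem bucharest_degrees (n : ℕ) (hn : 1 ≤ n) (c : HanoiConf n) :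
    {c' : HanoiConf n | bucharestMove c c'}.ncard =
      if (∀ d, c d = 0) ∨ (∀ d, c d = 2) then 1 else 2 := by
  have v0 : ((0 : Fin 3) : ℕ) = 0 := rfl
  have v1 : ((1 : Fin 3) : ℕ) = 1 := rfl
  have v2 : ((2 : Fin 3) : ℕ) = 2 := rfl
  set z : Fin n := ⟨0, hn⟩ with hzdef
  have hzle : ∀ d : Fin n, z ≤ d := fun d => by simp [Fin.le_def, hzdef]
  have hnltz : ∀ e : Fin n, ¬ e < z := fun e he => by
    have := Fin.lt_def.mp he; simp [hzdef] at this
  have hiz := (c z).isLt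
  rcases (by omega : (c z : ℕ) = 0 ∨ (c z : ℕ) = 1 ∨ (c z : ℕ) = 2) with h | h | h
  -- Case: smallest disk on peg 0
  · by_cases hall : ∀ d, c d = 0
    · have hS : {c' : HanoiConf n | bucharestMove c c'} = {Function.update c z 1} := by
        ext c'
        simp only [Set.mem_setOf_eq, Set.mem_singleton_iff]
        constructor
        · intro hb
          obtain ⟨d, h1, h2, h4, hupd⟩ := move_shape hb
          have hdz : d = z := by
            by_contra hne
            exact (h4 z (lt_of_le_of_ne (hzle d) (Ne.symm hne))).1
              (by rw [hall z, hall d])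
          subst hdz
          have i2 := (c' z).isLt
          have hv : (c' z : ℕ) = 1 := by omega
          rw [hupd, show c' z = 1 from veq (by omega)]
        · rintro rfl
          exact mk_move c z 1 (vne' (by rw [v1]; omega)) (Or.inl (by rw [v1]; omega))
            (fun e he => absurd he (hnltz e))
      rw [hS, Set.ncard_singleton, if_pos (Or.inl hall)]
    · have hne0 : (Finset.univ.filter (fun d => c d ≠ 0)).Nonempty := by
        obtain ⟨d₀, hd₀⟩ := not_forall.mp hall
        exact ⟨d₀, by simpa using hd₀⟩
      set m := (Finset.univ.filter (fun d => c d ≠ 0)).min' hne0 with hm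
      have hcm : c m ≠ 0 := by
        have := Finset.min'_mem _ hne0
        rw [← hm] at this
        simpa using this
      have hmin : ∀ e, e < m → c e = 0 := by
        intro e he
        by_contra hce
        exact absurd (Finset.min'_le _ e (by simpa using hce)) (not_le.mpr he)
      have hcmv := vne hcm
      rw [v0] at hcmv
      have him := (c m).isLt
      set t : Fin 3 := if (c m : ℕ) = 1 then 2 else 1 with ht
      have htv : (t : ℕ) = if (c m : ℕ) = 1 then 2 else 1 := by
        rw [ht]; split <;> simp [v1, v2]
      have hmz : m ≠ z := fun hh => hcm (by rw [hh]; exact veq (by rw [h, v0]))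
      have hS : {c' : HanoiConf n | bucharestMove c c'} =
          {Function.update c z 1, Function.update c m t} := by
        ext c'
        simp only [Set.mem_setOf_eq, Set.mem_insert_iff, Set.mem_singleton_iff]
        constructor
        · intro hb
          obtain ⟨d, h1, h2, h4, hupd⟩ := move_shape hb
          have hv1 := vne h1
          have icd := (c d).isLt
          have icd' := (c' d).isLt
          by_cases hdz : d = z
          · subst hdz
            have hv : (c' z : ℕ) = 1 := by omega
            left; rw [hupd, show c' z = 1 from veq (by omega)]
          · have hzd : z < d := lt_of_le_of_ne (hzle d) (Ne.symm hdz)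
            have hz4 := h4 z hzd
            have e1 := vne hz4.1
            have e2 := vne hz4.2
            rw [h] at e1 e2
            have hdm : d = m := by
              have hmd : m ≤ d := Finset.min'_le _ d
                (Finset.mem_filter.mpr ⟨Finset.mem_univ d, vne' (by rw [v0]; omega)⟩)
              rcases eq_or_lt_of_le hmd with hh | hh
              · exact hh.symm
              · have hm4 := h4 m hh
                have f1 := vne hm4.1
                have f2 := vne hm4.2
                omega
            subst hdm
            have hct : c' m = t := veq (by rw [htv]; split <;> omega)
            right; rw [hupd, hct]
        · rintro (rfl | rfl)
          · exact mk_move c z 1 (vne' (by rw [v1]; omega)) (Or.inl (by rw [v1]; omega))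
              (fun e he => absurd he (hnltz e))
          · refine mk_move c m t (vne' (by rw [htv]; split <;> omega)) ?_ ?_
            · by_cases hcm1 : (c m : ℕ) = 1
              · exact Or.inl (by rw [htv, if_pos hcm1]; omega)
              · exact Or.inr (by rw [htv, if_neg hcm1]; omega)
            · intro e he
              have h0 : (c e : ℕ) = 0 := by rw [hmin e he, v0]
              exact ⟨vne' (by omega), vne' (by rw [htv]; split <;> omega)⟩
      have hne : Function.update c z 1 ≠ Function.update c m t := by
        intro hh
        have h2 := congrFun hh z
        rw [Function.update_self, Function.update_of_ne (Ne.symm hmz)] at h2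
        have := congrArg Fin.val h2
        omega
      rw [hS, Set.ncard_pair hne, if_neg]
      rintro (ha | ha)
      · exact hall ha
      · have := congrArg Fin.val (ha z); omega
  -- Case: smallest disk on peg 1
  · have hS : {c' : HanoiConf n | bucharestMove c c'} =
        {Function.update c z 0, Function.update c z 2} := by
      ext c'
      simp only [Set.mem_setOf_eq, Set.mem_insert_iff, Set.mem_singleton_iff]
      constructor
      · intro hb
        obtain ⟨d, h1, h2, h4, hupd⟩ := move_shape hb
        have hv1 := vne h1
        have icd := (c d).isLt
        have icd' := (c' d).isLt
        have hdz : d = z := by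
          by_contra hne
          have hz4 := h4 z (lt_of_le_of_ne (hzle d) (Ne.symm hne))
          have e1 := vne hz4.1
          have e2 := vne hz4.2
          omega
        subst hdz
        rcases (by omega : (c' z : ℕ) = 0 ∨ (c' z : ℕ) = 2) with hv | hv
        · left; rw [hupd, show c' z = 0 from veq (by omega)]
        · right; rw [hupd, show c' z = 2 from veq (by omega)]
      · rintro (rfl | rfl)
        · exact mk_move c z 0 (vne' (by rw [v0]; omega)) (Or.inr (by rw [v0]; omega))
            (fun e he => absurd he (hnltz e))
        · exact mk_move c z 2 (vne' (by rw [v2]; omega)) (Or.inl (by rw [v2]; omega))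
            (fun e he => absurd he (hnltz e))
    have hne : Function.update c z 0 ≠ Function.update c z 2 := by
      intro hh
      have h2 := congrFun hh z
      rw [Function.update_self, Function.update_self] at h2
      exact absurd h2 (by decide)
    rw [hS, Set.ncard_pair hne, if_neg]
    rintro (ha | ha) <;> · have := congrArg Fin.val (ha z); omega
  -- Case: smallest disk on peg 2
  · by_cases hall : ∀ d, c d = 2
    · have hS : {c' : HanoiConf n | bucharestMove c c'} = {Function.update c z 1} := by
        ext c'
        simp only [Set.mem_setOf_eq, Set.mem_singleton_iff]
        constructor
        · intro hb
          obtain ⟨d, h1, h2, h4, hupd⟩ := move_shape hb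
          have hdz : d = z := by
            by_contra hne
            exact (h4 z (lt_of_le_of_ne (hzle d) (Ne.symm hne))).1
              (by rw [hall z, hall d])
          subst hdz
          have i2 := (c' z).isLt
          have hv1' := vne h1
          have hv : (c' z : ℕ) = 1 := by omega
          rw [hupd, show c' z = 1 from veq (by omega)]
        · rintro rfl
          exact mk_move c z 1 (vne' (by rw [v1]; omega)) (Or.inr (by rw [v1]; omega))
            (fun e he => absurd he (hnltz e))
      rw [hS, Set.ncard_singleton, if_pos (Or.inr hall)]
    · have hne0 : (Finset.univ.filter (fun d => c d ≠ 2)).Nonempty := by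
        obtain ⟨d₀, hd₀⟩ := not_forall.mp hall
        exact ⟨d₀, by simpa using hd₀⟩
      set m := (Finset.univ.filter (fun d => c d ≠ 2)).min' hne0 with hm
      have hcm : c m ≠ 2 := by
        have := Finset.min'_mem _ hne0
        rw [← hm] at this
        simpa using this
      have hmin : ∀ e, e < m → c e = 2 := by
        intro e he
        by_contra hce
        exact absurd (Finset.min'_le _ e (by simpa using hce)) (not_le.mpr he)
      have hcmv := vne hcm
      rw [v2] at hcmv
      have him := (c m).isLt
      set t : Fin 3 := if (c m : ℕ) = 1 then 0 else 1 with ht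
      have htv : (t : ℕ) = if (c m : ℕ) = 1 then 0 else 1 := by
        rw [ht]; split <;> simp [v0, v1]
      have hmz : m ≠ z := fun hh => hcm (by rw [hh]; exact veq (by rw [h, v2]))
      have hS : {c' : HanoiConf n | bucharestMove c c'} =
          {Function.update c z 1, Function.update c m t} := by
        ext c'
        simp only [Set.mem_setOf_eq, Set.mem_insert_iff, Set.mem_singleton_iff]
        constructor
        · intro hb
          obtain ⟨d, h1, h2, h4, hupd⟩ := move_shape hb
          have hv1 := vne h1
          have icd := (c d).isLt
          have icd' := (c' d).isLt
          by_cases hdz : d = z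
          · subst hdz
            have hv : (c' z : ℕ) = 1 := by omega
            left; rw [hupd, show c' z = 1 from veq (by omega)]
          · have hzd : z < d := lt_of_le_of_ne (hzle d) (Ne.symm hdz)
            have hz4 := h4 z hzd
            have e1 := vne hz4.1
            have e2 := vne hz4.2
            rw [h] at e1 e2
            have hdm : d = m := by
              have hmd : m ≤ d := Finset.min'_le _ d
                (Finset.mem_filter.mpr ⟨Finset.mem_univ d, vne' (by rw [v2]; omega)⟩)
              rcases eq_or_lt_of_le hmd with hh | hh
              · exact hh.symm
              · have hm4 := h4 m hh
                have f1 := vne hm4.1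
                have f2 := vne hm4.2
                omega
            subst hdm
            have hct : c' m = t := veq (by rw [htv]; split <;> omega)
            right; rw [hupd, hct]
        · rintro (rfl | rfl)
          · exact mk_move c z 1 (vne' (by rw [v1]; omega)) (Or.inr (by rw [v1]; omega))
              (fun e he => absurd he (hnltz e))
          · refine mk_move c m t (vne' (by rw [htv]; split <;> omega)) ?_ ?_
            · by_cases hcm1 : (c m : ℕ) = 1
              · exact Or.inr (by rw [htv, if_pos hcm1]; omega)
              · exact Or.inl (by rw [htv, if_neg hcm1]; omega)
            · intro e he
              have h0 : (c e : ℕ) = 2 := by rw [hmin e he, v2]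
              exact ⟨vne' (by omega), vne' (by rw [htv]; split <;> omega)⟩
      have hne : Function.update c z 1 ≠ Function.update c m t := by
        intro hh
        have h2 := congrFun hh z
        rw [Function.update_self, Function.update_of_ne (Ne.symm hmz)] at h2
        have := congrArg Fin.val h2
        omega
      rw [hS, Set.ncard_pair hne, if_neg]
      rintro (ha | ha)
      · have := congrArg Fin.val (ha z); omega
      · exact hall ha
end

section
/- The state graph of the Towers of Bucharest with n disks is a simple path on all 3^n configurations, with endpoints the configurations where all disks are on P_0 and all disks are on P_2. -/
/-!
The path is a ternary reflected Gray code: writing `L · p` for the list `L` with a new largest disk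
put on peg `p`, `L₀ = [∅]` and `Lₙ₊₁ = Lₙ · 0 ++ (reverse Lₙ) · 1 ++ Lₙ · 2`. Both junctions move
the largest disk over a tower standing on the third peg.

Conversely, every move uses the pegs `{P₀, P₁}` or `{P₁, P₂}`, and from a given configuration at
most one move uses a given pair: the disk that moves must be the smallest disk on those two pegs.
Hence every configuration has at most two neighbours, the two constant ones at most one, and a
Hamiltonian path in such a graph already contains every edge.
-/

namespace List

variable {α : Type*} {r : α → α → Prop} [Std.Symm r] [Std.Irrefl r] {l : List α}

theorem IsChain.exists_consecutive_of_rel (hch : l.IsChain r) (hnd : l.Nodup)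
    (hmem : ∀ x, x ∈ l)
    (hdeg : ∀ x y₁ y₂ y₃, r x y₁ → r x y₂ → r x y₃ → y₁ = y₂ ∨ y₁ = y₃ ∨ y₂ = y₃)
    (hhead : ∀ x ∈ l.head?, ∀ y z, r x y → r x z → y = z)
    (hlast : ∀ x ∈ l.getLast?, ∀ y z, r x y → r x z → y = z) {x y : α} (hxy : r x y) :
    ∃ k, ∃ hk : k + 1 < l.length,
      (l[k] = x ∧ l[k + 1] = y) ∨ (l[k] = y ∧ l[k + 1] = x) := by
  obtain ⟨i, hi, rfl⟩ := getElem_of_mem (hmem x)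
  rcases i with _ | j
  · by_cases h1 : 1 < l.length
    · have hy := hhead l[0] (by simp [head?_eq_getElem?]) _ _ hxy (hch.getElem 0 h1)
      exact ⟨0, h1, .inl ⟨rfl, hy.symm⟩⟩
    · obtain ⟨j, hj, rfl⟩ := getElem_of_mem (hmem y)
      obtain rfl : j = 0 := by omega
      exact (irrefl_of r _ hxy).elim
  · have hprev := symm_of r (hch.getElem j hi)
    by_cases h2 : j + 2 < l.length
    · rcases hdeg _ _ _ _ hxy hprev (hch.getElem (j + 1) h2) with h | h | h
      · exact ⟨j, hi, .inr ⟨h.symm, rfl⟩⟩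
      · exact ⟨j + 1, h2, .inl ⟨rfl, h.symm⟩⟩
      · have := (hnd.getElem_inj_iff).1 h
        omega
    · have hy := hlast l[j + 1] (by simp [getLast?_eq_getElem?, show l.length - 1 = j + 1 by omega])
        _ _ hxy hprev
      exact ⟨j, hi, .inr ⟨hy.symm, rfl⟩⟩

theorem IsChain.rel_iff_consecutive (hch : l.IsChain r) (hnd : l.Nodup)
    (hmem : ∀ x, x ∈ l)
    (hdeg : ∀ x y₁ y₂ y₃, r x y₁ → r x y₂ → r x y₃ → y₁ = y₂ ∨ y₁ = y₃ ∨ y₂ = y₃)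
    (hhead : ∀ x ∈ l.head?, ∀ y z, r x y → r x z → y = z)
    (hlast : ∀ x ∈ l.getLast?, ∀ y z, r x y → r x z → y = z) (a₀ x y : α) :
    r x y ↔ ∃ k, k + 1 < l.length ∧
      ((l.getD k a₀ = x ∧ l.getD (k + 1) a₀ = y) ∨ (l.getD k a₀ = y ∧ l.getD (k + 1) a₀ = x)) := by
  constructor
  · intro hxy
    obtain ⟨k, hk, h⟩ := hch.exists_consecutive_of_rel hnd hmem hdeg hhead hlast hxy
    refine ⟨k, hk, ?_⟩
    rwa [getD_eq_getElem _ _ (by omega), getD_eq_getElem _ _ hk]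
  · rintro ⟨k, hk, h⟩
    rw [getD_eq_getElem _ _ (by omega), getD_eq_getElem _ _ hk] at h
    rcases h with ⟨rfl, rfl⟩ | ⟨rfl, rfl⟩
    exacts [hch.getElem k hk, symm_of r (hch.getElem k hk)]

end List

section Moves

variable {n : ℕ}

theorem bucharestMove.symm {c c' : HanoiConf n} (h : bucharestMove c c') : bucharestMove c' c := by
  obtain ⟨d, hne, hadj, hsame, htop⟩ := h
  refine ⟨d, hne.symm, hadj.symm, fun e he => (hsame e he).symm, fun e he => ?_⟩
  rw [← hsame e he.ne]
  exact (htop e he).symm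

instance : Std.Symm (bucharestMove (n := n)) := ⟨fun _ _ => bucharestMove.symm⟩

instance : Std.Irrefl (bucharestMove (n := n)) := ⟨fun _ ⟨_, hne, _⟩ => hne rfl⟩

theorem bucharestMove.snoc {c c' : HanoiConf n} (h : bucharestMove c c') (p : Fin 3) :
    bucharestMove (Fin.snoc c p : HanoiConf (n + 1)) (Fin.snoc c' p) := by
  obtain ⟨d, hne, hadj, hsame, htop⟩ := h
  refine ⟨d.castSucc, by simpa using hne, by simpa using hadj, fun e he => ?_, fun e he => ?_⟩
  · induction e using Fin.lastCases with
    | last => simp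
    | cast e => simpa using hsame e (by rintro rfl; exact he rfl)
  · obtain ⟨e, rfl⟩ := Fin.exists_castSucc_eq.2 (he.trans (Fin.castSucc_lt_last d)).ne
    simpa using htop e (Fin.castSucc_lt_castSucc_iff.1 he)

theorem bucharestMove_snoc_const {p q r : Fin 3} (hpq : (p : ℕ) + 1 = q) (hrp : r ≠ p)
    (hrq : r ≠ q) :
    bucharestMove (Fin.snoc (fun _ => r) p : HanoiConf (n + 1)) (Fin.snoc (fun _ => r) q) := by
  refine ⟨Fin.last n, by simpa using Fin.ne_of_val_ne (by omega), by simpa using .inl hpq,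
    Fin.lastCases (fun h => (h rfl).elim) (fun e _ => by simp), fun e he => ?_⟩
  obtain ⟨e, rfl⟩ := Fin.exists_castSucc_eq.2 he.ne
  simpa using ⟨hrp, hrq⟩

def AvoidsPeg (p : Fin 3) (c c' : HanoiConf n) : Prop :=
  ∀ d, c d ≠ c' d → c d ≠ p ∧ c' d ≠ p

theorem bucharestMove.avoidsPeg_zero_or_two {c c' : HanoiConf n} (h : bucharestMove c c') :
    AvoidsPeg 0 c c' ∨ AvoidsPeg 2 c c' := by
  obtain ⟨d, -, hadj, hsame, -⟩ := h
  have hpegs : ∀ a b : Fin 3, (a : ℕ) + 1 = b ∨ (b : ℕ) + 1 = a →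
      (a ≠ 0 ∧ b ≠ 0) ∨ (a ≠ 2 ∧ b ≠ 2) := by decide
  have hmoved : ∀ p, c d ≠ p ∧ c' d ≠ p → AvoidsPeg p c c' := fun p hp e he => by
    obtain rfl : e = d := by_contra fun hed => he (hsame e hed)
    exact hp
  exact (hpegs _ _ hadj).imp (hmoved 0) (hmoved 2)

theorem Fin.snoc_const {α : Type*} (x : α) :
    (Fin.snoc (fun _ => x) x : Fin (n + 1) → α) = fun _ => x := by
  funext i
  induction i using Fin.lastCases <;> simp

theorem Fin.three_eq_or_eq {p a b x : Fin 3} (ha : a ≠ p) (hb : b ≠ p) (hx : x ≠ p)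
    (hab : a ≠ b) : x = a ∨ x = b := by
  revert p a b x
  decide

/-- Both moves must move the smallest disk not on `p`, to the one peg that is neither `p` nor its
own. -/
theorem bucharestMove.eq_of_avoidsPeg {p : Fin 3} {c c₁ c₂ : HanoiConf n}
    (h₁ : bucharestMove c c₁) (h₂ : bucharestMove c c₂) (a₁ : AvoidsPeg p c c₁)
    (a₂ : AvoidsPeg p c c₂) : c₁ = c₂ := by
  obtain ⟨d₁, hne₁, -, hsame₁, htop₁⟩ := h₁
  obtain ⟨d₂, hne₂, -, hsame₂, htop₂⟩ := h₂
  obtain ⟨hp₁, hp₁'⟩ := a₁ d₁ hne₁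
  obtain ⟨hp₂, hp₂'⟩ := a₂ d₂ hne₂
  obtain rfl : d₁ = d₂ := by
    by_contra hd
    rcases lt_or_gt_of_ne hd with hd | hd
    · obtain ⟨h, h'⟩ := htop₂ d₁ hd
      exact (Fin.three_eq_or_eq hp₂ hp₂' hp₁ hne₂).elim h h'
    · obtain ⟨h, h'⟩ := htop₁ d₂ hd
      exact (Fin.three_eq_or_eq hp₁ hp₁' hp₂ hne₁).elim h h'
  funext e
  by_cases he : e = d₁
  · subst he
    exact (Fin.three_eq_or_eq hp₂ hp₂' hp₁' hne₂).resolve_left (Ne.symm hne₁)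
  · rw [← hsame₁ e he, hsame₂ e he]

theorem bucharestMove.eq_or_eq_or_eq {c c₁ c₂ c₃ : HanoiConf n} (h₁ : bucharestMove c c₁)
    (h₂ : bucharestMove c c₂) (h₃ : bucharestMove c c₃) : c₁ = c₂ ∨ c₁ = c₃ ∨ c₂ = c₃ := by
  rcases h₁.avoidsPeg_zero_or_two with a₁ | a₁ <;>
  rcases h₂.avoidsPeg_zero_or_two with a₂ | a₂ <;>
  rcases h₃.avoidsPeg_zero_or_two with a₃ | a₃ <;>
  first
  | exact .inl (h₁.eq_of_avoidsPeg h₂ a₁ a₂)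
  | exact .inr (.inl (h₁.eq_of_avoidsPeg h₃ a₁ a₃))
  | exact .inr (.inr (h₂.eq_of_avoidsPeg h₃ a₂ a₃))

theorem bucharestMove.not_avoidsPeg_const {x : Fin 3} {c : HanoiConf n}
    (h : bucharestMove (fun _ => x) c) : ¬ AvoidsPeg x (fun _ => x) c :=
  fun ha => by
    obtain ⟨d, hne, -⟩ := h
    exact (ha d hne).1 rfl

theorem bucharestMove.eq_of_const_zero {c₁ c₂ : HanoiConf n} (h₁ : bucharestMove (fun _ => 0) c₁)
    (h₂ : bucharestMove (fun _ => 0) c₂) : c₁ = c₂ :=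
  h₁.eq_of_avoidsPeg h₂ (h₁.avoidsPeg_zero_or_two.resolve_left h₁.not_avoidsPeg_const)
    (h₂.avoidsPeg_zero_or_two.resolve_left h₂.not_avoidsPeg_const)

theorem bucharestMove.eq_of_const_two {c₁ c₂ : HanoiConf n} (h₁ : bucharestMove (fun _ => 2) c₁)
    (h₂ : bucharestMove (fun _ => 2) c₂) : c₁ = c₂ :=
  h₁.eq_of_avoidsPeg h₂ (h₁.avoidsPeg_zero_or_two.resolve_right h₁.not_avoidsPeg_const)
    (h₂.avoidsPeg_zero_or_two.resolve_right h₂.not_avoidsPeg_const)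

end Moves

section Path

variable {n : ℕ}

open List

def bucharestPath : (n : ℕ) → List (HanoiConf n)
  | 0 => [fun _ => 0]
  | n + 1 =>
      (bucharestPath n).map (Fin.snoc · 0) ++
        ((bucharestPath n).reverse.map (Fin.snoc · 1) ++ (bucharestPath n).map (Fin.snoc · 2))

theorem length_bucharestPath (n : ℕ) : (bucharestPath n).length = 3 ^ n := by
  induction n with
  | zero => rfl
  | succ n ih => simp only [bucharestPath, length_append, length_map, length_reverse, ih]; ring

theorem mem_bucharestPath (c : HanoiConf n) : c ∈ bucharestPath n := by
  induction n with
  | zero => simp [bucharestPath, Subsingleton.elim c (fun _ => 0)]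
  | succ n ih =>
    have hsnoc (p : Fin 3) (hp : c (Fin.last n) = p) : ∃ a, Fin.snoc a p = c :=
      ⟨Fin.init c, hp ▸ Fin.snoc_init_self c⟩
    have hlast : c (Fin.last n) = 0 ∨ c (Fin.last n) = 1 ∨ c (Fin.last n) = 2 := by omega
    simpa [bucharestPath, ih] using hlast.imp (hsnoc 0) (.imp (hsnoc 1) (hsnoc 2))

theorem nodup_bucharestPath (n : ℕ) : (bucharestPath n).Nodup := by
  induction n with
  | zero => simp [bucharestPath]
  | succ n ih =>
    have hinj (p : Fin 3) : Function.Injective (Fin.snoc · p : HanoiConf n → HanoiConf (n + 1)) :=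
      fun _ _ h => (Fin.snoc_inj.1 h).1
    simp [bucharestPath, nodup_append, ih.map (hinj _), or_imp, forall_and, Fin.snoc_inj]

theorem head?_bucharestPath (n : ℕ) : (bucharestPath n).head? = some (fun _ => 0) := by
  induction n with
  | zero => rfl
  | succ n ih => simp [bucharestPath, ih, Fin.snoc_const]

theorem getLast?_bucharestPath (n : ℕ) : (bucharestPath n).getLast? = some (fun _ => 2) := by
  induction n with
  | zero => simp [bucharestPath, Subsingleton.elim (fun _ : Fin 0 => (0 : Fin 3)) (fun _ => 2)]
  | succ n ih => simp [bucharestPath, ih, Fin.snoc_const]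

theorem isChain_bucharestPath (n : ℕ) : (bucharestPath n).IsChain bucharestMove := by
  induction n with
  | zero => exact isChain_singleton _
  | succ n ih =>
    simp only [bucharestPath, isChain_append, isChain_map, isChain_reverse]
    refine ⟨ih.imp fun _ _ h => h.snoc 0,
      ⟨ih.imp fun _ _ h => h.symm.snoc 1, ih.imp fun _ _ h => h.snoc 2, ?_⟩, ?_⟩
    · simpa [getLast?_reverse, head?_bucharestPath]
        using bucharestMove_snoc_const (p := 1) (q := 2) (r := 0) rfl (by decide) (by decide)
    · simpa [getLast?_bucharestPath, head?_reverse]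
        using bucharestMove_snoc_const (p := 0) (q := 1) (r := 2) rfl (by decide) (by decide)

end Path

/-- The state graph of the Towers of Bucharest with `n` disks is a simple path
through all `3^n` configurations, whose endpoints are the all-on-`P₀` and
all-on-`P₂` configurations: the configurations can be listed without
repetition so that the first is all-on-`P₀`, the last is all-on-`P₂`,
consecutive entries are joined by legal moves, and every legal move joins
consecutive entries of the list. -/
theorem bucharest_state_graph_is_path (n : ℕ) :
    ∃ l : List (HanoiConf n),
      l.length = 3 ^ n ∧ l.Nodup ∧
      l.head? = some (fun _ => 0) ∧ l.getLast? = some (fun _ => 2) ∧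
      l.Chain' bucharestMove ∧
      ∀ c c' : HanoiConf n, bucharestMove c c' ↔
        ∃ k, k + 1 < l.length ∧
          ((l.getD k default = c ∧ l.getD (k + 1) default = c') ∨
           (l.getD k default = c' ∧ l.getD (k + 1) default = c)) := by
  refine ⟨bucharestPath n, length_bucharestPath n, nodup_bucharestPath n, head?_bucharestPath n,
    getLast?_bucharestPath n, isChain_bucharestPath n, ?_⟩
  refine (isChain_bucharestPath n).rel_iff_consecutive (nodup_bucharestPath n) mem_bucharestPath
    (fun _ _ _ _ => bucharestMove.eq_or_eq_or_eq) ?_ ?_ default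
  · simpa [head?_bucharestPath] using fun _ _ => bucharestMove.eq_of_const_zero
  · simpa [getLast?_bucharestPath] using fun _ _ => bucharestMove.eq_of_const_two
end
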